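/- There exists a constant C > 0 such that for all smooth compactly supported functions f,g,h on ℝ³, ∫_{ℝ³} f g h dx ≤ C ‖f‖_{L^6}^{3/4} ‖∂₃f‖_{L²}^{1/4} ‖g‖_{L²}^{1/2} ‖∇_h g‖_{L²}^{1/2} ‖h‖_{L²}. -/

import Mathlib

open MeasureTheory

noncomputable def e3 (i : Fin 3) : EuclideanSpace ℝ (Fin 3) := EuclideanSpace.single i 1

noncomputable def pd (i : Fin 3) (f : EuclideanSpace ℝ (Fin 3) → ℝ) :
    EuclideanSpace ℝ (Fin 3) → ℝ :=
  fun x => fderiv ℝ f x (e3 i)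

noncomputable def LpR (f : EuclideanSpace ℝ (Fin 3) → ℝ) (p : ℝ) : ℝ :=
  (eLpNorm f (ENNReal.ofReal p) volume).toReal

/-- Pointwise norm of the horizontal gradient. -/
noncomputable def hGrad (f : EuclideanSpace ℝ (Fin 3) → ℝ) :
    EuclideanSpace ℝ (Fin 3) → ℝ :=
  fun x => Real.sqrt (pd 0 f x ^ 2 + pd 1 f x ^ 2)

/- ### Auxiliary development -/

open Set Function NNReal ENNReal

section Aux
noncomputable section

abbrev Pi3 := Fin 3 → ℝ
abbrev E3 := EuclideanSpace ℝ (Fin 3)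

/-- directional partial derivative on the pi side -/
def dI (i : Fin 3) (w : Pi3 → ℝ) : Pi3 → ℝ := fun x => fderiv ℝ w x (Pi.single i 1)

lemma hasDerivAt_comp_update {w : Pi3 → ℝ} (hw : ContDiff ℝ 1 w) (x : Pi3) (i : Fin 3) (t : ℝ) :
    HasDerivAt (w ∘ update x i) (dI i w (update x i t)) t := by
  have h1 : HasDerivAt (update x i) (Pi.single i 1) t := hasDerivAt_update x i t
  exact ((hw.differentiable one_ne_zero _).hasFDerivAt.comp_hasDerivAt t h1)

/-- FTC bound along a line -/
lemma line_bound {w : Pi3 → ℝ} (hw : ContDiff ℝ 1 w) (h2w : HasCompactSupport w)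
    (x : Pi3) (i : Fin 3) :
    (‖w x‖₊ : ℝ≥0∞) ≤ ∫⁻ t, ‖dI i w (update x i t)‖₊ := by
  have hcomp : ContDiff ℝ 1 (w ∘ update x i) := hw.comp (by convert contDiff_update 1 x i)
  have hsupp : HasCompactSupport (w ∘ update x i) :=
    h2w.comp_isClosedEmbedding (isClosedEmbedding_update x i)
  calc (‖w x‖₊ : ℝ≥0∞) = ‖(w ∘ update x i) (x i)‖₊ := by simp
    _ ≤ ∫⁻ t in Iic (x i), ‖deriv (w ∘ update x i) t‖₊ :=
        HasCompactSupport.enorm_le_lintegral_Ici_deriv hcomp hsupp _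
    _ ≤ ∫⁻ t, ‖deriv (w ∘ update x i) t‖₊ := lintegral_mono' Measure.restrict_le_self le_rfl
    _ = ∫⁻ t, ‖dI i w (update x i t)‖₊ := by
        congr 1; ext t
        rw [(hasDerivAt_comp_update hw x i t).deriv]

lemma dI_sq {w : Pi3 → ℝ} (hw : Differentiable ℝ w) (i : Fin 3) (x : Pi3) :
    dI i (fun y => w y ^ 2) x = 2 * w x * dI i w x := by
  have : (fun y => w y ^ 2) = fun y => w y * w y := by ext y; ring
  rw [dI, this, fderiv_fun_mul (hw x) (hw x)]
  simp [dI]; ring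

/-- the weight functions -/
def wt2 (w : Pi3 → ℝ) (i : Fin 3) : Pi3 → ℝ≥0∞ :=
  fun y => 2 * ‖w y‖₊ * ‖dI i w y‖₊

def wt4 (w : Pi3 → ℝ) (i : Fin 3) : Pi3 → ℝ≥0∞ :=
  fun y => 4 * (‖w y‖₊ * ‖w y‖₊ * ‖w y‖₊) * ‖dI i w y‖₊

lemma sq_line_bound {w : Pi3 → ℝ} (hw : ContDiff ℝ 1 w) (h2w : HasCompactSupport w)
    (x : Pi3) (i : Fin 3) :
    (‖w x‖₊ : ℝ≥0∞) * ‖w x‖₊ ≤ ∫⁻ t, wt2 w i (update x i t) := by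
  have hw2 : ContDiff ℝ 1 (fun y => w y ^ 2) := hw.pow 2
  have h2w2 : HasCompactSupport (fun y => w y ^ 2) :=
    h2w.comp_left (g := fun r : ℝ => r ^ 2) (by norm_num)
  have := line_bound hw2 h2w2 x i
  calc (‖w x‖₊ : ℝ≥0∞) * ‖w x‖₊ = ‖w x ^ 2‖₊ := by
        push_cast [← coe_mul]; congr 1; simp [nnnorm_pow, sq]
    _ ≤ ∫⁻ t, ‖dI i (fun y => w y ^ 2) (update x i t)‖₊ := this
    _ = ∫⁻ t, wt2 w i (update x i t) := by
        congr 1; ext t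
        rw [dI_sq (hw.differentiable one_ne_zero) i]
        simp [wt2, nnnorm_mul, mul_assoc]

lemma wt2_sq {w : Pi3 → ℝ} (hw : Differentiable ℝ w) (i : Fin 3) :
    wt2 (fun y => w y ^ 2) i = wt4 w i := by
  ext y
  rw [wt2, wt4, dI_sq hw i]
  have h1 : ‖w y ^ 2‖₊ = ‖w y‖₊ * ‖w y‖₊ := by simp [nnnorm_pow, sq]
  have h2 : ‖2 * w y * dI i w y‖₊ = 2 * (‖w y‖₊ * ‖dI i w y‖₊) := by
    simp [nnnorm_mul, mul_assoc]
  rw [h1, h2]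
  push_cast
  ring

lemma quart_line_bound {w : Pi3 → ℝ} (hw : ContDiff ℝ 1 w) (h2w : HasCompactSupport w)
    (x : Pi3) (i : Fin 3) :
    (‖w x‖₊ : ℝ≥0∞) * ‖w x‖₊ * (‖w x‖₊ * ‖w x‖₊) ≤ ∫⁻ t, wt4 w i (update x i t) := by
  have hw2 : ContDiff ℝ 1 (fun y => w y ^ 2) := hw.pow 2
  have h2w2 : HasCompactSupport (fun y => w y ^ 2) :=
    h2w.comp_left (g := fun r : ℝ => r ^ 2) (by norm_num)
  have := sq_line_bound hw2 h2w2 x i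
  rw [wt2_sq (hw.differentiable one_ne_zero) i] at this
  refine le_trans (le_of_eq ?_) this
  have h3 : (‖w x ^ 2‖₊ : ℝ≥0∞) = ‖w x‖₊ * ‖w x‖₊ := by
    simp [nnnorm_pow, sq]
  rw [h3]

/-- Loomis–Whitney-type trilinear inequality on `ℝ³`, derived from the grid-lines lemma by
a scaling trick. -/
lemma LW3 {a : Fin 3 → Pi3 → ℝ≥0∞} (ha : ∀ i, Measurable (a i))
    (h0 : ∀ i, (∫⁻ x, a i x) ≠ 0) (ht : ∀ i, (∫⁻ x, a i x) ≠ ∞) :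
    ∫⁻ x, ∏ i, (∫⁻ t, a i (update x i t)) ^ ((1:ℝ)/2) ≤
      (3:ℝ≥0∞) ^ ((3:ℝ)/2) * ∏ i, (∫⁻ x, a i x) ^ ((1:ℝ)/2) := by
  classical
  set S : Fin 3 → ℝ≥0∞ := fun i => ∫⁻ x, a i x with hS
  have hP0 : (∏ i, S i) ≠ 0 := by
    rw [Finset.prod_ne_zero_iff]; exact fun i _ => h0 i
  have hPt : (∏ i, S i) ≠ ∞ := by
    exact (ENNReal.prod_lt_top (fun i _ => (ht i).lt_top)).ne
  set G : ℝ≥0∞ := (∏ i, S i) ^ ((1:ℝ)/3) with hG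
  have hG0 : G ≠ 0 := by
    simp only [hG, ne_eq, ENNReal.rpow_eq_zero_iff]
    push_neg
    constructor
    · intro h; exact absurd h hP0
    · intro h; exact absurd h hPt
  have hGt : G ≠ ∞ := by
    simp only [hG, ne_eq, ENNReal.rpow_eq_top_iff]
    push_neg
    constructor
    · intro h; exact absurd h hP0
    · intro h; exact absurd h hPt
  set lam : Fin 3 → ℝ≥0∞ := fun i => G * (S i)⁻¹ with hlam
  have hlam0 : ∀ i, lam i ≠ 0 := fun i => by
    simp [hlam, mul_eq_zero, hG0, ENNReal.inv_eq_zero, show S i ≠ ∞ from ht i]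
  have hlamt : ∀ i, lam i ≠ ∞ := fun i => by
    simp only [hlam, ne_eq, ENNReal.mul_eq_top]
    push_neg
    constructor
    · intro _; exact fun h => absurd (ENNReal.inv_eq_top.mp h) (h0 i)
    · intro h; exact absurd h hGt
  have hlamS : ∀ i, lam i * S i = G := fun i => by
    rw [hlam, mul_assoc, ENNReal.inv_mul_cancel (h0 i) (ht i), mul_one]
  have hprodlamS : ∏ i, (lam i * S i) = G ^ (3:ℕ) := by
    simp_rw [hlamS]; simp [Finset.prod_const]
  have hG3 : G ^ (3:ℕ) = ∏ i, S i := by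
    rw [hG, ← ENNReal.rpow_natCast (((∏ i, S i) ^ ((1:ℝ)/3))) 3, ← ENNReal.rpow_mul]
    norm_num
  have hprodlam : ∏ i, lam i = 1 := by
    have h1 : (∏ i, lam i) * (∏ i, S i) = ∏ i, S i := by
      rw [← Finset.prod_mul_distrib, hprodlamS, hG3]
    have := congrArg (· * (∏ i, S i)⁻¹) h1
    simpa [mul_assoc, ENNReal.mul_inv_cancel hP0 hPt] using this
  set f : Pi3 → ℝ≥0∞ := fun x => ∑ i, lam i * a i x with hf
  have hfm : Measurable f := by
    apply Finset.measurable_sum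
    exact fun i _ => (ha i).const_mul _
  have hif : ∫⁻ x, f x = 3 * G := by
    rw [hf]
    rw [lintegral_finset_sum _ (fun i _ => (ha i).const_mul _)]
    have hc : ∀ i, (∫⁻ x, lam i * a i x) = lam i * S i := fun i =>
      lintegral_const_mul _ (ha i)
    simp_rw [hc]
    simp_rw [hlamS]
    simp [Finset.sum_const]
  have hlam1 : ∏ i, (lam i) ^ ((1:ℝ)/2) = 1 := by
    rw [ENNReal.prod_rpow_of_nonneg (by norm_num : (0:ℝ) ≤ 1/2), hprodlam,
      ENNReal.one_rpow]
  have key : ∫⁻ x, ∏ i, (∫⁻ t, f (update x i t)) ^ ((1:ℝ)/2) ≤ (∫⁻ x, f x) ^ ((3:ℝ)/2) := by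
    have h2 : (0:ℝ) ≤ 1/2 := by norm_num
    have h3 : ((Fintype.card (Fin 3) : ℝ) - 1) * (1/2) ≤ 1 := by
      simp [Fintype.card_fin]; norm_num
    have key0 := lintegral_mul_prod_lintegral_pow_le (fun _ : Fin 3 => (volume : Measure ℝ))
      h2 h3 hfm
    rw [← volume_pi] at key0
    simp only [Fintype.card_fin, Nat.cast_ofNat,
      show (1:ℝ) - ((3:ℝ)-1)*(1/2) = 0 by norm_num, ENNReal.rpow_zero, one_mul,
      show (1:ℝ)+1/2 = 3/2 by norm_num] at key0
    exact key0
  calc ∫⁻ x, ∏ i, (∫⁻ t, a i (update x i t)) ^ ((1:ℝ)/2)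
      = ∫⁻ x, ∏ i, (∫⁻ t, lam i * a i (update x i t)) ^ ((1:ℝ)/2) := by
        congr 1; ext x
        have hc : ∀ i, (∫⁻ t, lam i * a i (update x i t)) =
            lam i * ∫⁻ t, a i (update x i t) := fun i =>
          lintegral_const_mul _ ((ha i).comp (measurable_update x))
        rw [Finset.prod_congr rfl (fun i _ => congrArg (· ^ ((1:ℝ)/2)) (hc i)),
          Finset.prod_congr rfl
            (fun i _ => ENNReal.mul_rpow_of_nonneg (lam i) _ (by norm_num : (0:ℝ) ≤ 1/2)),
          Finset.prod_mul_distrib, hlam1, one_mul]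
    _ ≤ ∫⁻ x, ∏ i, (∫⁻ t, f (update x i t)) ^ ((1:ℝ)/2) := by
        apply lintegral_mono; intro x
        apply Finset.prod_le_prod' ; intro i _
        apply ENNReal.rpow_le_rpow _ (by norm_num)
        apply lintegral_mono; intro t
        exact Finset.single_le_sum (f := fun j => lam j * a j (update x i t))
          (fun j _ => zero_le) (Finset.mem_univ i)
    _ ≤ (∫⁻ x, f x) ^ ((3:ℝ)/2) := key
    _ = (3:ℝ≥0∞) ^ ((3:ℝ)/2) * ∏ i, (S i) ^ ((1:ℝ)/2) := by
        rw [hif, ENNReal.mul_rpow_of_nonneg _ _ (by norm_num : (0:ℝ) ≤ 3/2)]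
        congr 1
        rw [hG, ← ENNReal.rpow_mul,
          ENNReal.prod_rpow_of_nonneg (by norm_num : (0:ℝ) ≤ 1/2)]
        norm_num

/-- the continuous linear equiv from `Pi3` to `E3` -/
def TE : Pi3 ≃L[ℝ] E3 := (PiLp.continuousLinearEquiv 2 ℝ (fun _ : Fin 3 => ℝ)).symm

lemma TE_measurePreserving : MeasurePreserving (TE : Pi3 → E3) volume volume :=
  PiLp.volume_preserving_toLp (Fin 3)

lemma lintegral_transfer (F : E3 → ℝ≥0∞) (hF : Measurable F) :
    ∫⁻ z, F z = ∫⁻ y, F (TE y) := (TE_measurePreserving.lintegral_comp hF).symm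

def V (u : E3 → ℝ) : Pi3 → ℝ := fun y => u (TE y)

lemma V_contDiff {u : E3 → ℝ} (hu : ContDiff ℝ 1 u) : ContDiff ℝ 1 (V u) :=
  hu.comp (TE : Pi3 ≃L[ℝ] E3).contDiff

lemma V_compSupp {u : E3 → ℝ} (hu : HasCompactSupport u) : HasCompactSupport (V u) :=
  hu.comp_homeomorph (TE : Pi3 ≃L[ℝ] E3).toHomeomorph

lemma dI_V {u : E3 → ℝ} (hu : ContDiff ℝ 1 u) (i : Fin 3) (y : Pi3) :
    dI i (V u) y = pd i u (TE y) := by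
  have h1 : DifferentiableAt ℝ u (TE y) := (hu.differentiable one_ne_zero) _
  have h2 : DifferentiableAt ℝ (TE : Pi3 → E3) y := TE.differentiableAt
  have hV : V u = u ∘ (TE : Pi3 → E3) := rfl
  rw [dI, hV, fderiv_comp y h1 h2, TE.fderiv]
  simp only [ContinuousLinearMap.coe_comp', Function.comp_apply,
    ContinuousLinearEquiv.coe_coe]
  rw [pd]
  congr 1

lemma dI_continuous {w : Pi3 → ℝ} (hw : ContDiff ℝ 1 w) (i : Fin 3) :
    Continuous (dI i w) :=
  (ContinuousLinearMap.apply ℝ ℝ (Pi.single i 1)).continuous.comp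
    (hw.continuous_fderiv one_ne_zero)

lemma wt2_measurable {w : Pi3 → ℝ} (hw : ContDiff ℝ 1 w) (i : Fin 3) :
    Measurable (wt2 w i) := by
  apply Measurable.fun_mul
  · exact (measurable_const.mul (hw.continuous.measurable.nnnorm.coe_nnreal_ennreal))
  · exact (dI_continuous hw i).measurable.nnnorm.coe_nnreal_ennreal

lemma wt4_measurable {w : Pi3 → ℝ} (hw : ContDiff ℝ 1 w) (i : Fin 3) :
    Measurable (wt4 w i) := by
  have h1 := hw.continuous.measurable.nnnorm.coe_nnreal_ennreal
  apply Measurable.fun_mul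
  · exact measurable_const.mul ((h1.mul h1).mul h1)
  · exact (dI_continuous hw i).measurable.nnnorm.coe_nnreal_ennreal

/-- If the `wt2` weight has zero integral, the function vanishes identically. -/
lemma wt2_zero {w : Pi3 → ℝ} (hw : ContDiff ℝ 1 w) (h2w : HasCompactSupport w) (i : Fin 3)
    (h : (∫⁻ y, wt2 w i y) = 0) : ∀ x, w x = 0 := by
  -- the weight is continuous as an `ℝ≥0`-valued function
  set ψ : Pi3 → ℝ≥0 := fun y => 2 * ‖w y‖₊ * ‖dI i w y‖₊ with hψ
  have hcoe : ∀ y, wt2 w i y = (ψ y : ℝ≥0∞) := by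
    intro y; rw [wt2, hψ]; push_cast; ring
  have hψc : Continuous ψ := by
    apply Continuous.mul
    · exact continuous_const.mul hw.continuous.nnnorm
    · exact (dI_continuous hw i).nnnorm
  have hae : ψ =ᵐ[(volume : Measure Pi3)] 0 := by
    have hm : Measurable (wt2 w i) := wt2_measurable hw i
    have := (lintegral_eq_zero_iff hm).mp h
    filter_upwards [this] with y hy
    have : (ψ y : ℝ≥0∞) = 0 := by rw [← hcoe y]; exact hy
    simpa using this
  have hzero : ψ = 0 := (hψc.ae_eq_iff_eq volume continuous_const).mp hae
  intro x
  have hb := sq_line_bound hw h2w x i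
  have : ∫⁻ t, wt2 w i (update x i t) = 0 := by
    have : ∀ t, wt2 w i (update x i t) = 0 := by
      intro t; rw [hcoe, congrFun hzero]; simp
    simp [this]
  rw [this] at hb
  have h0 : (‖w x‖₊ : ℝ≥0∞) * ‖w x‖₊ = 0 := le_antisymm hb zero_le
  rcases mul_eq_zero.mp h0 with h1 | h1 <;> simpa using h1

lemma wt4_zero {w : Pi3 → ℝ} (hw : ContDiff ℝ 1 w) (h2w : HasCompactSupport w) (i : Fin 3)
    (h : (∫⁻ y, wt4 w i y) = 0) : ∀ x, w x = 0 := by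
  have hw2 : ContDiff ℝ 1 (fun y => w y ^ 2) := hw.pow 2
  have h2w2 : HasCompactSupport (fun y => w y ^ 2) :=
    h2w.comp_left (g := fun r : ℝ => r ^ 2) (by norm_num)
  have h' : (∫⁻ y, wt2 (fun y => w y ^ 2) i y) = 0 := by
    rw [wt2_sq (hw.differentiable one_ne_zero) i]; exact h
  have := wt2_zero hw2 h2w2 i h'
  intro x
  have := this x
  nlinarith [this]


lemma conj22 : Real.HolderConjugate 2 2 := Real.HolderConjugate.two_two

lemma CS2 {α : Type*} [MeasurableSpace α] (μ : Measure α) {F G : α → ℝ≥0∞}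
    (hF : Measurable F) (hG : Measurable G) :
    ∫⁻ x, F x * G x ∂μ ≤
      (∫⁻ x, F x ^ (2:ℝ) ∂μ) ^ ((1:ℝ)/2) * (∫⁻ x, G x ^ (2:ℝ) ∂μ) ^ ((1:ℝ)/2) := by
  have := ENNReal.lintegral_mul_le_Lp_mul_Lq μ conj22 hF.aemeasurable hG.aemeasurable
  simpa [Pi.mul_apply] using this

lemma wt2_int_le {w : Pi3 → ℝ} (hw : ContDiff ℝ 1 w) (i : Fin 3) :
    ∫⁻ y, wt2 w i y ≤
      2 * ((∫⁻ y, ((‖w y‖₊ : ℝ≥0∞)) ^ (2:ℝ)) ^ ((1:ℝ)/2) *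
        (∫⁻ y, ((‖dI i w y‖₊ : ℝ≥0∞)) ^ (2:ℝ)) ^ ((1:ℝ)/2)) := by
  have hptw : ∀ y, wt2 w i y = 2 * ((‖w y‖₊ : ℝ≥0∞) * ‖dI i w y‖₊) := fun y => by
    rw [wt2]; ring
  have hA : Measurable (fun y => (‖w y‖₊ : ℝ≥0∞)) :=
    hw.continuous.measurable.nnnorm.coe_nnreal_ennreal
  have hB : Measurable (fun y => (‖dI i w y‖₊ : ℝ≥0∞)) :=
    (dI_continuous hw i).measurable.nnnorm.coe_nnreal_ennreal
  calc ∫⁻ y, wt2 w i y = 2 * ∫⁻ y, (‖w y‖₊ : ℝ≥0∞) * ‖dI i w y‖₊ := by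
        simp_rw [hptw]; rw [lintegral_const_mul _ (hA.fun_mul hB)]
    _ ≤ 2 * ((∫⁻ y, ((‖w y‖₊ : ℝ≥0∞)) ^ (2:ℝ)) ^ ((1:ℝ)/2) *
        (∫⁻ y, ((‖dI i w y‖₊ : ℝ≥0∞)) ^ (2:ℝ)) ^ ((1:ℝ)/2)) := by
        refine mul_le_mul_right ?_ 2
        simpa using CS2 volume hA hB

lemma wt4_int_le {w : Pi3 → ℝ} (hw : ContDiff ℝ 1 w) (i : Fin 3) :
    ∫⁻ y, wt4 w i y ≤
      4 * ((∫⁻ y, ((‖w y‖₊ : ℝ≥0∞)) ^ (6:ℝ)) ^ ((1:ℝ)/2) *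
        (∫⁻ y, ((‖dI i w y‖₊ : ℝ≥0∞)) ^ (2:ℝ)) ^ ((1:ℝ)/2)) := by
  have hptw : ∀ y, wt4 w i y =
      4 * (((‖w y‖₊ : ℝ≥0∞) * ‖w y‖₊ * ‖w y‖₊) * ‖dI i w y‖₊) := fun y => by
    rw [wt4]; ring
  have hA0 : Measurable (fun y => (‖w y‖₊ : ℝ≥0∞)) :=
    hw.continuous.measurable.nnnorm.coe_nnreal_ennreal
  have hA : Measurable (fun y => (‖w y‖₊ : ℝ≥0∞) * ‖w y‖₊ * ‖w y‖₊) :=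
    (hA0.mul hA0).mul hA0
  have hB : Measurable (fun y => (‖dI i w y‖₊ : ℝ≥0∞)) :=
    (dI_continuous hw i).measurable.nnnorm.coe_nnreal_ennreal
  have hA6 : ∀ y, ((‖w y‖₊ : ℝ≥0∞) * ‖w y‖₊ * ‖w y‖₊) ^ (2:ℝ) = (‖w y‖₊ : ℝ≥0∞) ^ (6:ℝ) := by
    intro y
    rw [show ((‖w y‖₊ : ℝ≥0∞) * ‖w y‖₊ * ‖w y‖₊) = (‖w y‖₊ : ℝ≥0∞) ^ (3:ℕ) by ring,
      ← ENNReal.rpow_natCast _ 3, ← ENNReal.rpow_mul]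
    norm_num
  calc ∫⁻ y, wt4 w i y
      = 4 * ∫⁻ y, ((‖w y‖₊ : ℝ≥0∞) * ‖w y‖₊ * ‖w y‖₊) * ‖dI i w y‖₊ := by
        simp_rw [hptw]; rw [lintegral_const_mul _ (hA.fun_mul hB)]
    _ ≤ 4 * ((∫⁻ y, (((‖w y‖₊ : ℝ≥0∞) * ‖w y‖₊ * ‖w y‖₊)) ^ (2:ℝ)) ^ ((1:ℝ)/2) *
        (∫⁻ y, ((‖dI i w y‖₊ : ℝ≥0∞)) ^ (2:ℝ)) ^ ((1:ℝ)/2)) := by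
        refine mul_le_mul_right ?_ 4
        simpa using CS2 volume hA hB
    _ = 4 * ((∫⁻ y, ((‖w y‖₊ : ℝ≥0∞)) ^ (6:ℝ)) ^ ((1:ℝ)/2) *
        (∫⁻ y, ((‖dI i w y‖₊ : ℝ≥0∞)) ^ (2:ℝ)) ^ ((1:ℝ)/2)) := by
        simp_rw [hA6]

lemma pd_continuous {u : E3 → ℝ} (hu : ContDiff ℝ 1 u) (i : Fin 3) :
    Continuous (pd i u) :=
  (ContinuousLinearMap.apply ℝ ℝ (e3 i)).continuous.comp (hu.continuous_fderiv one_ne_zero)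

lemma pd_compactSupport {u : E3 → ℝ} (h2u : HasCompactSupport u) (i : Fin 3) :
    HasCompactSupport (pd i u) := by
  have : pd i u = (fun L : E3 →L[ℝ] ℝ => L (e3 i)) ∘ fderiv ℝ u := rfl
  rw [this]
  exact (h2u.fderiv ℝ).comp_left (by simp)

lemma hGrad_continuous {u : E3 → ℝ} (hu : ContDiff ℝ 1 u) : Continuous (hGrad u) := by
  have h0 := pd_continuous hu 0
  have h1 := pd_continuous hu 1
  exact Real.continuous_sqrt.comp (((h0.pow 2).add (h1.pow 2)))

lemma hGrad_compactSupport {u : E3 → ℝ} (h2u : HasCompactSupport u) :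
    HasCompactSupport (hGrad u) := by
  have : hGrad u =
      (fun L : E3 →L[ℝ] ℝ => Real.sqrt ((L (e3 0)) ^ 2 + (L (e3 1)) ^ 2)) ∘ fderiv ℝ u := rfl
  rw [this]
  exact (h2u.fderiv ℝ).comp_left (by simp)

lemma transfer_rpow {u : E3 → ℝ} (hu : Continuous u) (r : ℝ) :
    ∫⁻ y, ((‖V u y‖₊ : ℝ≥0∞)) ^ r = ∫⁻ z, ((‖u z‖₊ : ℝ≥0∞)) ^ r :=
  (lintegral_transfer (fun z => ((‖u z‖₊ : ℝ≥0∞)) ^ r)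
    (hu.measurable.nnnorm.coe_nnreal_ennreal.pow_const _)).symm

lemma transfer_dI {u : E3 → ℝ} (hu : ContDiff ℝ 1 u) (i : Fin 3) (r : ℝ) :
    ∫⁻ y, ((‖dI i (V u) y‖₊ : ℝ≥0∞)) ^ r = ∫⁻ z, ((‖pd i u z‖₊ : ℝ≥0∞)) ^ r := by
  simp_rw [dI_V hu i]
  exact (lintegral_transfer (fun z => ((‖pd i u z‖₊ : ℝ≥0∞)) ^ r)
    ((pd_continuous hu i).measurable.nnnorm.coe_nnreal_ennreal.pow_const _)).symm

lemma lint_ne_top {u : E3 → ℝ} (hu : Continuous u) (h2u : HasCompactSupport u)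
    {r : ℝ} (hr : 0 < r) : (∫⁻ z, ((‖u z‖₊ : ℝ≥0∞)) ^ r) ≠ ∞ := by
  have hm : MemLp u (ENNReal.ofReal r) volume := hu.memLp_of_hasCompactSupport h2u
  have hlt := hm.eLpNorm_lt_top
  rw [eLpNorm_eq_lintegral_rpow_enorm_toReal (by simpa using hr) ENNReal.ofReal_ne_top] at hlt
  rw [ENNReal.toReal_ofReal hr.le] at hlt
  have := (ENNReal.rpow_lt_top_iff_of_pos (by positivity : (0:ℝ) < 1/r)).mp hlt
  exact this.ne

lemma eLp_pow (u : E3 → ℝ) {r : ℝ} (hr : 0 < r) :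
    ∫⁻ z, ((‖u z‖₊ : ℝ≥0∞)) ^ r = (eLpNorm u (ENNReal.ofReal r) volume) ^ r := by
  rw [eLpNorm_eq_lintegral_rpow_enorm_toReal (by simpa using hr) ENNReal.ofReal_ne_top,
    ENNReal.toReal_ofReal hr.le, ← ENNReal.rpow_mul]
  rw [one_div, inv_mul_cancel₀ hr.ne', ENNReal.rpow_one]
  rfl


end
end Aux
theorem anisotropic_trilinear_q4 :
    ∃ C : ℝ, 0 < C ∧ ∀ f g h : EuclideanSpace ℝ (Fin 3) → ℝ,
      ContDiff ℝ (⊤ : ℕ∞) f → HasCompactSupport f →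
      ContDiff ℝ (⊤ : ℕ∞) g → HasCompactSupport g →
      ContDiff ℝ (⊤ : ℕ∞) h → HasCompactSupport h →
      ∫ x, f x * g x * h x ≤
        C * LpR f 6 ^ (3/4 : ℝ) * LpR (pd 2 f) 2 ^ (1/4 : ℝ) *
          LpR g 2 ^ (1/2 : ℝ) * LpR (hGrad g) 2 ^ (1/2 : ℝ) * LpR h 2 := by
  classical
  refine ⟨24, by norm_num, ?_⟩
  intro f g h hf h2f hg h2g hh h2h
  have hf1 : ContDiff ℝ 1 f := hf.of_le (by simp)
  have hg1 : ContDiff ℝ 1 g := hg.of_le (by simp)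
  have hh1 : ContDiff ℝ 1 h := hh.of_le (by simp)
  set vf := V f with hvf_def
  set vg := V g with hvg_def
  have hvf : ContDiff ℝ 1 vf := V_contDiff hf1
  have hvg : ContDiff ℝ 1 vg := V_contDiff hg1
  have h2vf : HasCompactSupport vf := V_compSupp h2f
  have h2vg : HasCompactSupport vg := V_compSupp h2g
  -- nonnegativity of the RHS
  have hLpR : ∀ (u : EuclideanSpace ℝ (Fin 3) → ℝ) (p : ℝ), 0 ≤ LpR u p := fun u p =>
    ENNReal.toReal_nonneg
  have hRHS : (0:ℝ) ≤ 24 * LpR f 6 ^ (3/4 : ℝ) * LpR (pd 2 f) 2 ^ (1/4 : ℝ) *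
      LpR g 2 ^ (1/2 : ℝ) * LpR (hGrad g) 2 ^ (1/2 : ℝ) * LpR h 2 := by
    refine mul_nonneg (mul_nonneg (mul_nonneg (mul_nonneg (mul_nonneg (by norm_num)
      (Real.rpow_nonneg (hLpR f 6) _)) (Real.rpow_nonneg (hLpR _ 2) _))
      (Real.rpow_nonneg (hLpR g 2) _)) (Real.rpow_nonneg (hLpR _ 2) _)) (hLpR h 2)
  -- shortcut when the integrand vanishes identically
  have hdone : (∀ z : E3, f z * g z * h z = 0) →
      ∫ x, f x * g x * h x ≤ 24 * LpR f 6 ^ (3/4 : ℝ) * LpR (pd 2 f) 2 ^ (1/4 : ℝ) *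
        LpR g 2 ^ (1/2 : ℝ) * LpR (hGrad g) 2 ^ (1/2 : ℝ) * LpR h 2 := by
    intro h0
    have : ∫ x, f x * g x * h x = 0 := by simp only [h0, integral_zero]
    rw [this]; exact hRHS
  -- the three weights
  set a : Fin 3 → Pi3 → ℝ≥0∞ := ![wt2 vg 0, wt2 vg 1, wt4 vf 2] with ha_def
  have ha0 : a 0 = wt2 vg 0 := rfl
  have ha1 : a 1 = wt2 vg 1 := rfl
  have ha2 : a 2 = wt4 vf 2 := rfl
  have ha : ∀ i, Measurable (a i) := by
    intro i; fin_cases i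
    · exact wt2_measurable hvg 0
    · exact wt2_measurable hvg 1
    · exact wt4_measurable hvf 2
  -- degenerate cases
  by_cases hz0 : (∫⁻ y, a 0 y) = 0
  · refine hdone ?_
    have hvg0 := wt2_zero hvg h2vg 0 (by rwa [ha0] at hz0)
    intro z
    have : g z = 0 := by
      have := hvg0 (TE.symm z)
      rwa [hvg_def, V, TE.apply_symm_apply] at this
    rw [this]; ring
  by_cases hz1 : (∫⁻ y, a 1 y) = 0
  · refine hdone ?_
    have hvg0 := wt2_zero hvg h2vg 1 (by rwa [ha1] at hz1)
    intro z
    have : g z = 0 := by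
      have := hvg0 (TE.symm z)
      rwa [hvg_def, V, TE.apply_symm_apply] at this
    rw [this]; ring
  by_cases hz2 : (∫⁻ y, a 2 y) = 0
  · refine hdone ?_
    have hvf0 := wt4_zero hvf h2vf 2 (by rwa [ha2] at hz2)
    intro z
    have : f z = 0 := by
      have := hvf0 (TE.symm z)
      rwa [hvf_def, V, TE.apply_symm_apply] at this
    rw [this]; ring
  have hS0ne : ∀ i, (∫⁻ y, a i y) ≠ 0 := by
    intro i; fin_cases i
    · exact hz0
    · exact hz1
    · exact hz2
  -- the E3-side integrals
  set I6 := ∫⁻ z, ((‖f z‖₊ : ℝ≥0∞)) ^ (6:ℝ) with hI6_def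
  set Ipd := ∫⁻ z, ((‖pd 2 f z‖₊ : ℝ≥0∞)) ^ (2:ℝ) with hIpd_def
  set Ig := ∫⁻ z, ((‖g z‖₊ : ℝ≥0∞)) ^ (2:ℝ) with hIg_def
  set IH := ∫⁻ z, ((‖hGrad g z‖₊ : ℝ≥0∞)) ^ (2:ℝ) with hIH_def
  set Ih := ∫⁻ z, ((‖h z‖₊ : ℝ≥0∞)) ^ (2:ℝ) with hIh_def
  have hI6t : I6 ≠ ∞ := lint_ne_top hf1.continuous h2f (by norm_num)
  have hIpdt : Ipd ≠ ∞ :=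
    lint_ne_top (pd_continuous hf1 2) (pd_compactSupport h2f 2) (by norm_num)
  have hIgt : Ig ≠ ∞ := lint_ne_top hg1.continuous h2g (by norm_num)
  have hIHt : IH ≠ ∞ :=
    lint_ne_top (hGrad_continuous hg1) (hGrad_compactSupport h2g) (by norm_num)
  have hIht : Ih ≠ ∞ := lint_ne_top hh1.continuous h2h (by norm_num)
  -- bounds on the weight masses
  set U := 2 * (Ig ^ ((1:ℝ)/2) * IH ^ ((1:ℝ)/2)) with hU_def
  set W := 4 * (I6 ^ ((1:ℝ)/2) * Ipd ^ ((1:ℝ)/2)) with hW_def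
  have hpdH : ∀ i, i = 0 ∨ i = 1 → ∀ z, (‖pd i g z‖₊ : ℝ≥0∞) ≤ ‖hGrad g z‖₊ := by
    intro i hi z
    have h1 : ‖pd i g z‖ ≤ ‖hGrad g z‖ := by
      rw [Real.norm_eq_abs, Real.norm_eq_abs, hGrad,
        abs_of_nonneg (Real.sqrt_nonneg _), ← Real.sqrt_sq_eq_abs]
      rcases hi with hi | hi <;> subst hi
      · exact Real.sqrt_le_sqrt (le_add_of_nonneg_right (sq_nonneg _))
      · exact Real.sqrt_le_sqrt (le_add_of_nonneg_left (sq_nonneg _))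
    have h2 : ‖pd i g z‖₊ ≤ ‖hGrad g z‖₊ := by
      rw [← NNReal.coe_le_coe, coe_nnnorm, coe_nnnorm]; exact h1
    exact_mod_cast h2
  have hpdH_int : ∀ i, i = 0 ∨ i = 1 →
      (∫⁻ z, ((‖pd i g z‖₊ : ℝ≥0∞)) ^ (2:ℝ)) ≤ IH := by
    intro i hi
    apply lintegral_mono; intro z
    exact ENNReal.rpow_le_rpow (hpdH i hi z) (by norm_num)
  have hSU : ∀ i, i = 0 ∨ i = 1 → (∫⁻ y, wt2 vg i y) ≤ U := by
    intro i hi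
    refine le_trans (wt2_int_le hvg i) ?_
    rw [transfer_rpow hg1.continuous 2, transfer_dI hg1 i 2]
    rw [hU_def]
    refine mul_le_mul_right ?_ 2
    refine mul_le_mul_right ?_ _
    exact ENNReal.rpow_le_rpow (hpdH_int i hi) (by norm_num)
  have hSW : (∫⁻ y, wt4 vf 2 y) ≤ W := by
    refine le_trans (wt4_int_le hvf 2) ?_
    rw [transfer_rpow hf1.continuous 6, transfer_dI hf1 2 2]
  have hUt : U ≠ ∞ := by
    rw [hU_def]
    refine ENNReal.mul_ne_top (by norm_num) (ENNReal.mul_ne_top ?_ ?_)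
    · exact ENNReal.rpow_ne_top_of_nonneg (by norm_num) hIgt
    · exact ENNReal.rpow_ne_top_of_nonneg (by norm_num) hIHt
  have hWt : W ≠ ∞ := by
    rw [hW_def]
    refine ENNReal.mul_ne_top (by norm_num) (ENNReal.mul_ne_top ?_ ?_)
    · exact ENNReal.rpow_ne_top_of_nonneg (by norm_num) hI6t
    · exact ENNReal.rpow_ne_top_of_nonneg (by norm_num) hIpdt
  have hStop : ∀ i, (∫⁻ y, a i y) ≠ ∞ := by
    intro i; fin_cases i
    · exact ((hSU 0 (Or.inl rfl)).trans_lt hUt.lt_top).ne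
    · exact ((hSU 1 (Or.inr rfl)).trans_lt hUt.lt_top).ne
    · exact (hSW.trans_lt hWt.lt_top).ne
  -- Step 1: Cauchy-Schwarz in the whole space
  set XE := ∫⁻ z, ((‖f z‖₊ : ℝ≥0∞) * ‖g z‖₊) ^ (2:ℝ) with hXE_def
  have mf : Measurable (fun z => (‖f z‖₊ : ℝ≥0∞)) :=
    hf1.continuous.measurable.nnnorm.coe_nnreal_ennreal
  have mg : Measurable (fun z => (‖g z‖₊ : ℝ≥0∞)) :=
    hg1.continuous.measurable.nnnorm.coe_nnreal_ennreal
  have mh : Measurable (fun z => (‖h z‖₊ : ℝ≥0∞)) :=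
    hh1.continuous.measurable.nnnorm.coe_nnreal_ennreal
  have hstep1 : (∫⁻ z, (‖f z * g z * h z‖₊ : ℝ≥0∞)) ≤
      XE ^ ((1:ℝ)/2) * Ih ^ ((1:ℝ)/2) := by
    have hpt1 : ∀ z, (‖f z * g z * h z‖₊ : ℝ≥0∞) =
        ((‖f z‖₊ : ℝ≥0∞) * ‖g z‖₊) * ‖h z‖₊ := by
      intro z; rw [nnnorm_mul, nnnorm_mul]; push_cast; ring
    calc (∫⁻ z, (‖f z * g z * h z‖₊ : ℝ≥0∞))
        = ∫⁻ z, ((‖f z‖₊ : ℝ≥0∞) * ‖g z‖₊) * ‖h z‖₊ := by simp_rw [hpt1]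
      _ ≤ XE ^ ((1:ℝ)/2) * Ih ^ ((1:ℝ)/2) := CS2 volume (mf.mul mg) mh
  -- Step 2: transfer to the pi side and pointwise grid bound
  have hXEpi : XE = ∫⁻ y, ((‖vf y‖₊ : ℝ≥0∞) * ‖vg y‖₊) ^ (2:ℝ) := by
    rw [hXE_def]
    exact lintegral_transfer (fun z => ((‖f z‖₊ : ℝ≥0∞) * ‖g z‖₊) ^ (2:ℝ))
      ((mf.mul mg).pow_const _)
  have hpt : ∀ y : Pi3, ((‖vf y‖₊ : ℝ≥0∞) * ‖vg y‖₊) ^ (2:ℝ) ≤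
      ∏ i, (∫⁻ t, a i (update y i t)) ^ ((1:ℝ)/2) := by
    intro y
    set A := (‖vf y‖₊ : ℝ≥0∞) with hA_def
    set B := (‖vg y‖₊ : ℝ≥0∞) with hB_def
    set L0 := ∫⁻ t, a 0 (update y 0 t) with hL0_def
    set L1 := ∫⁻ t, a 1 (update y 1 t) with hL1_def
    set L2 := ∫⁻ t, a 2 (update y 2 t) with hL2_def
    have hb0 : B * B ≤ L0 := by
      rw [hL0_def, ha0]; exact sq_line_bound hvg h2vg y 0
    have hb1 : B * B ≤ L1 := by
      rw [hL1_def, ha1]; exact sq_line_bound hvg h2vg y 1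
    have hb2 : A * A * (A * A) ≤ L2 := by
      rw [hL2_def, ha2]; exact quart_line_bound hvf h2vf y 2
    calc (A * B) ^ (2:ℝ)
        = ((A * A * (A * A)) * ((B * B) * (B * B))) ^ ((1:ℝ)/2) := by
          rw [show (A * A * (A * A)) * ((B * B) * (B * B)) = (A * B) ^ (4:ℕ) by ring,
            ← ENNReal.rpow_natCast (A * B) 4, ← ENNReal.rpow_mul]
          norm_num
      _ ≤ (L2 * (L0 * L1)) ^ ((1:ℝ)/2) :=
          ENNReal.rpow_le_rpow (mul_le_mul' hb2 (mul_le_mul' hb0 hb1)) (by norm_num)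
      _ = L0 ^ ((1:ℝ)/2) * L1 ^ ((1:ℝ)/2) * L2 ^ ((1:ℝ)/2) := by
          rw [ENNReal.mul_rpow_of_nonneg _ _ (by norm_num : (0:ℝ) ≤ 1/2),
            ENNReal.mul_rpow_of_nonneg _ _ (by norm_num : (0:ℝ) ≤ 1/2)]
          ring
      _ = ∏ i, (∫⁻ t, a i (update y i t)) ^ ((1:ℝ)/2) := by
          rw [Fin.prod_univ_three]
  -- Step 3: Loomis-Whitney
  have hLW : XE ≤ (3:ℝ≥0∞) ^ ((3:ℝ)/2) * (U ^ ((1:ℝ)/2) * U ^ ((1:ℝ)/2) * W ^ ((1:ℝ)/2)) := by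
    rw [hXEpi]
    calc ∫⁻ y, ((‖vf y‖₊ : ℝ≥0∞) * ‖vg y‖₊) ^ (2:ℝ)
        ≤ ∫⁻ y, ∏ i, (∫⁻ t, a i (update y i t)) ^ ((1:ℝ)/2) := lintegral_mono hpt
      _ ≤ (3:ℝ≥0∞) ^ ((3:ℝ)/2) * ∏ i, (∫⁻ y, a i y) ^ ((1:ℝ)/2) := LW3 ha hS0ne hStop
      _ = (3:ℝ≥0∞) ^ ((3:ℝ)/2) * ((∫⁻ y, a 0 y) ^ ((1:ℝ)/2) * (∫⁻ y, a 1 y) ^ ((1:ℝ)/2) *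
          (∫⁻ y, a 2 y) ^ ((1:ℝ)/2)) := by rw [Fin.prod_univ_three]
      _ ≤ (3:ℝ≥0∞) ^ ((3:ℝ)/2) * (U ^ ((1:ℝ)/2) * U ^ ((1:ℝ)/2) * W ^ ((1:ℝ)/2)) := by
          refine mul_le_mul_right ?_ _
          refine mul_le_mul' (mul_le_mul' ?_ ?_) ?_
          · exact ENNReal.rpow_le_rpow (by rw [ha0] at *; exact hSU 0 (Or.inl rfl)) (by norm_num)
          · exact ENNReal.rpow_le_rpow (by rw [ha1] at *; exact hSU 1 (Or.inr rfl)) (by norm_num)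
          · exact ENNReal.rpow_le_rpow (by rw [ha2] at *; exact hSW) (by norm_num)
  -- simplify U^{1/2} * U^{1/2}
  have hUU : U ^ ((1:ℝ)/2) * U ^ ((1:ℝ)/2) = U := by
    rw [← ENNReal.mul_rpow_of_nonneg U U (by norm_num : (0:ℝ) ≤ 1/2),
      show U * U = U ^ (2:ℕ) by ring, ← ENNReal.rpow_natCast U 2, ← ENNReal.rpow_mul]
    norm_num
  -- eLpNorm quantities
  set N6 := eLpNorm f (ENNReal.ofReal 6) volume with hN6_def
  set Npd := eLpNorm (pd 2 f) (ENNReal.ofReal 2) volume with hNpd_def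
  set Ng := eLpNorm g (ENNReal.ofReal 2) volume with hNg_def
  set NH := eLpNorm (hGrad g) (ENNReal.ofReal 2) volume with hNH_def
  set Nh := eLpNorm h (ENNReal.ofReal 2) volume with hNh_def
  have hI6N : I6 = N6 ^ (6:ℝ) := eLp_pow f (by norm_num)
  have hIpdN : Ipd = Npd ^ (2:ℝ) := eLp_pow (pd 2 f) (by norm_num)
  have hIgN : Ig = Ng ^ (2:ℝ) := eLp_pow g (by norm_num)
  have hIHN : IH = NH ^ (2:ℝ) := eLp_pow (hGrad g) (by norm_num)
  have hIhN : Ih = Nh ^ (2:ℝ) := eLp_pow h (by norm_num)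
  -- assemble the ENNReal-valued inequality
  set Q : ℝ≥0∞ := 24 * N6 ^ ((3:ℝ)/4) * Npd ^ ((1:ℝ)/4) * Ng ^ ((1:ℝ)/2) *
      NH ^ ((1:ℝ)/2) * Nh with hQ_def
  have hconst : (3:ℝ≥0∞) ^ ((3:ℝ)/4) * (2:ℝ≥0∞) ^ ((1:ℝ)/2) * (4:ℝ≥0∞) ^ ((1:ℝ)/4)
      ≤ 24 := by
    have e1 : (3:ℝ≥0∞) ^ ((3:ℝ)/4) ≤ 3 := by
      conv_rhs => rw [← ENNReal.rpow_one (3:ℝ≥0∞)]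
      exact ENNReal.rpow_le_rpow_of_exponent_le (by norm_num) (by norm_num)
    have e2 : (2:ℝ≥0∞) ^ ((1:ℝ)/2) ≤ 2 := by
      conv_rhs => rw [← ENNReal.rpow_one (2:ℝ≥0∞)]
      exact ENNReal.rpow_le_rpow_of_exponent_le (by norm_num) (by norm_num)
    have e3 : (4:ℝ≥0∞) ^ ((1:ℝ)/4) ≤ 4 := by
      conv_rhs => rw [← ENNReal.rpow_one (4:ℝ≥0∞)]
      exact ENNReal.rpow_le_rpow_of_exponent_le (by norm_num) (by norm_num)
    calc (3:ℝ≥0∞) ^ ((3:ℝ)/4) * (2:ℝ≥0∞) ^ ((1:ℝ)/2) * (4:ℝ≥0∞) ^ ((1:ℝ)/4)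
        ≤ 3 * 2 * 4 := mul_le_mul' (mul_le_mul' e1 e2) e3
      _ = 24 := by norm_num
  have hmain : (∫⁻ z, (‖f z * g z * h z‖₊ : ℝ≥0∞)) ≤ Q := by
    have hhalf : (0:ℝ) ≤ 1/2 := by norm_num
    calc (∫⁻ z, (‖f z * g z * h z‖₊ : ℝ≥0∞))
        ≤ XE ^ ((1:ℝ)/2) * Ih ^ ((1:ℝ)/2) := hstep1
      _ ≤ ((3:ℝ≥0∞) ^ ((3:ℝ)/2) * (U * W ^ ((1:ℝ)/2))) ^ ((1:ℝ)/2) * Ih ^ ((1:ℝ)/2) := by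
          refine mul_le_mul_left (ENNReal.rpow_le_rpow ?_ hhalf) _
          refine le_trans hLW (le_of_eq ?_)
          rw [hUU]
      _ = (3:ℝ≥0∞) ^ ((3:ℝ)/4) * (U ^ ((1:ℝ)/2) * W ^ ((1:ℝ)/4)) * Ih ^ ((1:ℝ)/2) := by
          rw [ENNReal.mul_rpow_of_nonneg _ _ hhalf, ENNReal.mul_rpow_of_nonneg U _ hhalf,
            ← ENNReal.rpow_mul (3:ℝ≥0∞), ← ENNReal.rpow_mul W]
          norm_num
      _ = (3:ℝ≥0∞) ^ ((3:ℝ)/4) *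
            ((2:ℝ≥0∞) ^ ((1:ℝ)/2) * (Ng ^ ((1:ℝ)/2) * NH ^ ((1:ℝ)/2)) *
             ((4:ℝ≥0∞) ^ ((1:ℝ)/4) * (N6 ^ ((3:ℝ)/4) * Npd ^ ((1:ℝ)/4)))) *
            Nh := by
          have hU12 : U ^ ((1:ℝ)/2) =
              (2:ℝ≥0∞) ^ ((1:ℝ)/2) * (Ng ^ ((1:ℝ)/2) * NH ^ ((1:ℝ)/2)) := by
            rw [hU_def, hIgN, hIHN,
              ENNReal.mul_rpow_of_nonneg _ _ hhalf, ENNReal.mul_rpow_of_nonneg _ _ hhalf,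
              ← ENNReal.rpow_mul Ng, ← ENNReal.rpow_mul NH]
            norm_num
          have hW14 : W ^ ((1:ℝ)/4) =
              (4:ℝ≥0∞) ^ ((1:ℝ)/4) * (N6 ^ ((3:ℝ)/4) * Npd ^ ((1:ℝ)/4)) := by
            rw [hW_def, hI6N, hIpdN,
              ENNReal.mul_rpow_of_nonneg _ _ (by norm_num : (0:ℝ) ≤ 1/4),
              ENNReal.mul_rpow_of_nonneg _ _ (by norm_num : (0:ℝ) ≤ 1/4),
              ← ENNReal.rpow_mul N6, ← ENNReal.rpow_mul Npd,
              ← ENNReal.rpow_mul N6, ← ENNReal.rpow_mul Npd]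
            norm_num
          have hIh12 : Ih ^ ((1:ℝ)/2) = Nh := by
            rw [hIhN, ← ENNReal.rpow_mul Nh]
            norm_num
          rw [hU12, hW14, hIh12]
      _ = ((3:ℝ≥0∞) ^ ((3:ℝ)/4) * (2:ℝ≥0∞) ^ ((1:ℝ)/2) * (4:ℝ≥0∞) ^ ((1:ℝ)/4)) *
            (N6 ^ ((3:ℝ)/4) * Npd ^ ((1:ℝ)/4) * Ng ^ ((1:ℝ)/2) * NH ^ ((1:ℝ)/2) * Nh) := by
          ring
      _ ≤ 24 * (N6 ^ ((3:ℝ)/4) * Npd ^ ((1:ℝ)/4) * Ng ^ ((1:ℝ)/2) * NH ^ ((1:ℝ)/2) * Nh) :=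
          mul_le_mul_left hconst _
      _ = Q := by rw [hQ_def]; ring
  -- finiteness of Q
  have hN6t : N6 ≠ ∞ :=
    (hf1.continuous.memLp_of_hasCompactSupport (p := ENNReal.ofReal 6) h2f).eLpNorm_lt_top.ne
  have hNpdt : Npd ≠ ∞ :=
    ((pd_continuous hf1 2).memLp_of_hasCompactSupport (p := ENNReal.ofReal 2)
      (pd_compactSupport h2f 2)).eLpNorm_lt_top.ne
  have hNgt : Ng ≠ ∞ :=
    (hg1.continuous.memLp_of_hasCompactSupport (p := ENNReal.ofReal 2) h2g).eLpNorm_lt_top.ne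
  have hNHt : NH ≠ ∞ :=
    ((hGrad_continuous hg1).memLp_of_hasCompactSupport (p := ENNReal.ofReal 2)
      (hGrad_compactSupport h2g)).eLpNorm_lt_top.ne
  have hNht : Nh ≠ ∞ :=
    (hh1.continuous.memLp_of_hasCompactSupport (p := ENNReal.ofReal 2) h2h).eLpNorm_lt_top.ne
  have hQt : Q ≠ ∞ := by
    rw [hQ_def]
    refine ENNReal.mul_ne_top (ENNReal.mul_ne_top (ENNReal.mul_ne_top (ENNReal.mul_ne_top
      (ENNReal.mul_ne_top (by norm_num) ?_) ?_) ?_) ?_) hNht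
    · exact ENNReal.rpow_ne_top_of_nonneg (by norm_num) hN6t
    · exact ENNReal.rpow_ne_top_of_nonneg (by norm_num) hNpdt
    · exact ENNReal.rpow_ne_top_of_nonneg (by norm_num) hNgt
    · exact ENNReal.rpow_ne_top_of_nonneg (by norm_num) hNHt
  -- back to the real-valued statement
  have hreal1 : ∫ x, f x * g x * h x ≤
      (∫⁻ z, (‖f z * g z * h z‖₊ : ℝ≥0∞)).toReal := by
    have h1 : ∫ x, f x * g x * h x ≤ ‖∫ x, f x * g x * h x‖ := by
      rw [Real.norm_eq_abs]; exact le_abs_self _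
    refine h1.trans ?_
    calc ‖∫ x, f x * g x * h x‖
        ≤ (∫⁻ z, ENNReal.ofReal ‖f z * g z * h z‖).toReal :=
          norm_integral_le_lintegral_norm (μ := (volume : Measure E3)) _
      _ = (∫⁻ z, (‖f z * g z * h z‖₊ : ℝ≥0∞)).toReal := by
          simp_rw [ofReal_norm, enorm_eq_nnnorm]
  have hreal2 : (∫⁻ z, (‖f z * g z * h z‖₊ : ℝ≥0∞)).toReal ≤ Q.toReal :=
    ENNReal.toReal_mono hQt hmain
  refine (hreal1.trans hreal2).trans (le_of_eq ?_)
  rw [hQ_def]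
  rw [ENNReal.toReal_mul, ENNReal.toReal_mul, ENNReal.toReal_mul, ENNReal.toReal_mul,
    ENNReal.toReal_mul]
  simp only [← ENNReal.toReal_rpow]
  rw [hN6_def, hNpd_def, hNg_def, hNH_def, hNh_def]
  norm_num [LpR]
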